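/- Let X be a Banach space and m : Σ → X a σ-additive vector measure. If {hₙ} ⊆ L¹(m) is weakly null and the functions hₙ have pairwise disjoint supports, then {|hₙ|} is weakly null in L¹(m). -/

import Mathlib

open MeasureTheory Filter Topology
open scoped ENNReal

noncomputable section

namespace Paper

variable {Ω : Type*} [MeasurableSpace Ω]
variable {X : Type*} [NormedAddCommGroup X] [NormedSpace ℝ X]

/-- The signed measure `x* ∘ m` for a functional `x*` and vector measure `m`. -/
def dualApply (m : VectorMeasure Ω X) (x : X →L[ℝ] ℝ) : SignedMeasure Ω :=
  m.mapRange x.toLinearMap.toAddMonoidHom x.continuous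

/-- The semivariation `‖m‖(A)` of a vector measure. -/
def semivar (m : VectorMeasure Ω X) (A : Set Ω) : ℝ≥0∞ :=
  ⨆ x : {x : X →L[ℝ] ℝ // ‖x‖ ≤ 1}, (dualApply m x.1).totalVariation A

/-- `P` holds `‖m‖`-almost everywhere. -/
def MAE (m : VectorMeasure Ω X) (P : Ω → Prop) : Prop :=
  ∃ N : Set Ω, MeasurableSet N ∧ semivar m N = 0 ∧ ∀ ω ∉ N, P ω

/-- The integral `∫_A f ds` of a real function with respect to a signed measure. -/
def sIntegral (s : SignedMeasure Ω) (f : Ω → ℝ) (A : Set Ω) : ℝ :=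
  (∫ ω in A, f ω ∂s.toJordanDecomposition.posPart) -
    ∫ ω in A, f ω ∂s.toJordanDecomposition.negPart

/-- `f` is integrable with respect to the vector measure `m` (Bartle-Dunford-Schwartz). -/
def MIntegrable (m : VectorMeasure Ω X) (f : Ω → ℝ) : Prop :=
  Measurable f ∧
  (∀ x : X →L[ℝ] ℝ, Integrable f ((dualApply m x).totalVariation)) ∧
  (∀ A : Set Ω, MeasurableSet A →
    ∃ v : X, ∀ x : X →L[ℝ] ℝ, x v = sIntegral (dualApply m x) f A)

open Classical in
/-- The vector integral `∫_A f dm ∈ X`. -/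
def mIntegral (m : VectorMeasure Ω X) (f : Ω → ℝ) (A : Set Ω) : X :=
  if h : ∃ v : X, ∀ x : X →L[ℝ] ℝ, x v = sIntegral (dualApply m x) f A then h.choose
  else 0

/-- The norm of `L¹(m)`: `‖f‖ = sup_{‖x*‖ ≤ 1} ∫ |f| d|x*m|`. -/
def mNorm (m : VectorMeasure Ω X) (f : Ω → ℝ) : ℝ :=
  ⨆ x : {x : X →L[ℝ] ℝ // ‖x‖ ≤ 1}, ∫ ω, |f ω| ∂(dualApply m x.1).totalVariation

/-- The vector measure `m` is separable: the pseudometric space `(Σ, d_m)`,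
`d_m(A,B) = ‖m‖(A △ B)`, is separable. -/
def SeparableVM (m : VectorMeasure Ω X) : Prop :=
  ∃ D : Set (Set Ω), D.Countable ∧ (∀ B ∈ D, MeasurableSet B) ∧
    ∀ A : Set Ω, MeasurableSet A → ∀ ε : ℝ, 0 < ε →
      ∃ B ∈ D, semivar m (symmDiff A B) < ENNReal.ofReal ε

section FunctionSpace

variable {S : Type*} [MeasurableSpace S]

/-- `T` is a bounded linear functional on the function space determined by the
membership predicate `mem` and the norm `nrm`. -/
def IsBddLinFunctional (mem : (S → ℝ) → Prop) (nrm : (S → ℝ) → ℝ)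
    (T : (S → ℝ) → ℝ) : Prop :=
  (∀ f g, mem f → mem g → T (f + g) = T f + T g) ∧
  (∀ (c : ℝ) (f), mem f → T (c • f) = c * T f) ∧
  (∃ C : ℝ, ∀ f, mem f → |T f| ≤ C * nrm f)

/-- `f` is a weakly null sequence in the function space `(mem, nrm)`. -/
def WeaklyNullSeq (mem : (S → ℝ) → Prop) (nrm : (S → ℝ) → ℝ) (f : ℕ → S → ℝ) : Prop :=
  ∀ T : (S → ℝ) → ℝ, IsBddLinFunctional mem nrm T →
    Tendsto (fun n => T (f n)) atTop (nhds 0)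

/-- The set `K` has uniformly absolutely continuous norm in the function space with
norm `nrm` over the measure `μ`. -/
def UnifACNorm (μ : Measure S) (nrm : (S → ℝ) → ℝ) (K : Set (S → ℝ)) : Prop :=
  ∀ ε : ℝ, 0 < ε → ∃ δ : ℝ, 0 < δ ∧ ∀ A : Set S, MeasurableSet A →
    μ A < ENNReal.ofReal δ → ∀ f ∈ K, nrm (A.indicator f) ≤ ε

/-- The subsequence splitting property for the function space `(mem, nrm)` over `μ`. -/
def HasSSP (μ : Measure S) (mem : (S → ℝ) → Prop) (nrm : (S → ℝ) → ℝ) : Prop :=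
  ∀ f : ℕ → S → ℝ, (∀ n, mem (f n)) → (∃ C : ℝ, ∀ n, nrm (f n) ≤ C) →
    ∃ σ : ℕ → ℕ, StrictMono σ ∧
      ∃ g h : ℕ → S → ℝ,
        (∀ n, mem (g n)) ∧ (∀ n, mem (h n)) ∧
        (∀ n, f (σ n) = g n + h n) ∧
        (∀ n, (fun s => g n s * h n s) =ᵐ[μ] 0) ∧
        UnifACNorm μ nrm (Set.range g) ∧
        (∀ i j, i ≠ j → (fun s => h i s * h j s) =ᵐ[μ] 0)

/-- The weak Banach-Saks property for the function space `(mem, nrm)`. -/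
def HasWBS (mem : (S → ℝ) → Prop) (nrm : (S → ℝ) → ℝ) : Prop :=
  ∀ f : ℕ → S → ℝ, (∀ n, mem (f n)) → WeaklyNullSeq mem nrm f →
    ∃ σ : ℕ → ℕ, StrictMono σ ∧
      Tendsto (fun n : ℕ => nrm ((n : ℝ)⁻¹ • ∑ k ∈ Finset.range n, f (σ k))) atTop (nhds 0)

end FunctionSpace

/-- A Banach function space over `(S, μ)`: an (abstract) normed space `X` together with
a linear embedding `J` into measurable functions on `S`, separating points modulo
`μ`-null sets and satisfying the ideal property. -/
structure BFS (S : Type*) [MeasurableSpace S] (μ : Measure S)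
    (X : Type*) [NormedAddCommGroup X] [NormedSpace ℝ X] where
  J : X →ₗ[ℝ] (S → ℝ)
  aemeasurable : ∀ x : X, AEMeasurable (J x) μ
  eq_zero : ∀ x : X, J x =ᵐ[μ] 0 → x = 0
  ideal : ∀ (x : X) (g : S → ℝ), AEMeasurable g μ →
    (∀ᵐ s ∂μ, |g s| ≤ |J x s|) → ∃ y : X, J y =ᵐ[μ] g ∧ ‖y‖ ≤ ‖x‖

variable {S : Type*} [MeasurableSpace S] {μ : Measure S}

/-- The set `K ⊆ X` has uniformly absolutely continuous norm in the B.f.s. `X`. -/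
def BFS.UnifAC (B : BFS S μ X) (K : Set X) : Prop :=
  ∀ ε : ℝ, 0 < ε → ∃ δ : ℝ, 0 < δ ∧ ∀ A : Set S, MeasurableSet A →
    μ A < ENNReal.ofReal δ → ∀ x ∈ K, ∀ y : X, B.J y =ᵐ[μ] A.indicator (B.J x) → ‖y‖ ≤ ε

/-- The B.f.s. `X` has absolutely continuous norm. -/
def BFS.ACNorm (B : BFS S μ X) : Prop :=
  ∀ x : X, ∀ ε : ℝ, 0 < ε → ∃ δ : ℝ, 0 < δ ∧ ∀ A : Set S, MeasurableSet A →
    μ A < ENNReal.ofReal δ → ∀ y : X, B.J y =ᵐ[μ] A.indicator (B.J x) → ‖y‖ ≤ ε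

/-- The subsequence splitting property for the B.f.s. `X`. -/
def BFS.SSP (B : BFS S μ X) : Prop :=
  ∀ f : ℕ → X, (∃ C : ℝ, ∀ n, ‖f n‖ ≤ C) →
    ∃ σ : ℕ → ℕ, StrictMono σ ∧
      ∃ g h : ℕ → X,
        (∀ n, f (σ n) = g n + h n) ∧
        (∀ n, (fun s => B.J (g n) s * B.J (h n) s) =ᵐ[μ] 0) ∧
        B.UnifAC (Set.range g) ∧
        (∀ i j, i ≠ j → (fun s => B.J (h i) s * B.J (h j) s) =ᵐ[μ] 0)

/-- The weak Banach-Saks property for a normed space `Z`: every weakly null sequence has a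
subsequence whose arithmetic means converge to zero in norm. -/
def WeakBanachSaks (Z : Type*) [NormedAddCommGroup Z] [NormedSpace ℝ Z] : Prop :=
  ∀ z : ℕ → Z, (∀ φ : Z →L[ℝ] ℝ, Tendsto (fun n => φ (z n)) atTop (nhds 0)) →
    ∃ σ : ℕ → ℕ, StrictMono σ ∧
      Tendsto (fun n : ℕ => ‖(n : ℝ)⁻¹ • ∑ k ∈ Finset.range n, z (σ k)‖) atTop (nhds 0)

/-! Off one `m`-null set the `hₙ` have pairwise disjoint supports, so a single sign function
`u` (equal to `-1` on `⋃ₙ {hₙ < 0}` and to `1` elsewhere) satisfies `|hₙ| = u hₙ`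
`‖m‖`-a.e. for every `n`. Multiplication by `u` is a linear isometry of `L¹(m)`, hence for
every `T ∈ L¹(m)*` also `f ↦ T (u f)` lies in `L¹(m)*`, and `T |hₙ| = T (u hₙ) → 0`. -/

open scoped NNReal

lemma dualApply_nnreal_smul (m : VectorMeasure Ω X) (r : ℝ≥0) (x : X →L[ℝ] ℝ) :
    dualApply m (r • x) = r • dualApply m x :=
  VectorMeasure.ext fun _ _ => rfl

lemma totalVariation_nnreal_smul (s : SignedMeasure Ω) (r : ℝ≥0) :
    (r • s).totalVariation = r • s.totalVariation := by
  simp [SignedMeasure.totalVariation, SignedMeasure.toJordanDecomposition_smul, smul_add]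

lemma totalVariation_dualApply_eq_zero {m : VectorMeasure Ω X} {N : Set Ω}
    (hN : semivar m N = 0) (x : X →L[ℝ] ℝ) : (dualApply m x).totalVariation N = 0 := by
  -- `r⁻¹ • x` lies in the unit ball; the `+ 1` spares the case `x = 0`.
  set r : ℝ≥0 := ‖x‖₊ + 1
  have hr : r ≠ 0 := by positivity
  have hy : ‖r⁻¹ • x‖ ≤ 1 := by
    rw [NNReal.smul_def, norm_smul]
    simp only [r, NNReal.coe_inv, NNReal.coe_add, coe_nnnorm, NNReal.coe_one, norm_inv,
      Real.norm_of_nonneg (by positivity : (0 : ℝ) ≤ ‖x‖ + 1)]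
    exact inv_mul_le_one_of_le₀ (le_add_of_nonneg_right zero_le_one) (by positivity)
  have hyN : (dualApply m (r⁻¹ • x)).totalVariation N = 0 :=
    nonpos_iff_eq_zero.1 <| hN ▸ le_iSup (fun y : {y : X →L[ℝ] ℝ // ‖y‖ ≤ 1} =>
      (dualApply m y.1).totalVariation N) ⟨_, hy⟩
  rw [← smul_inv_smul₀ hr x, dualApply_nnreal_smul,
    totalVariation_nnreal_smul, Measure.smul_apply, hyN, smul_zero]

lemma semivar_empty (m : VectorMeasure Ω X) : semivar m ∅ = 0 := by
  simp [semivar]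

lemma semivar_iUnion_null {ι : Type*} [Countable ι] {m : VectorMeasure Ω X}
    {N : ι → Set Ω} (hN : ∀ i, semivar m (N i) = 0) : semivar m (⋃ i, N i) = 0 :=
  nonpos_iff_eq_zero.1 <| iSup_le fun x =>
    (measure_iUnion_null fun i => totalVariation_dualApply_eq_zero (hN i) x.1).le

lemma MAE.of_forall {m : VectorMeasure Ω X} {P : Ω → Prop} (hP : ∀ ω, P ω) : MAE m P :=
  ⟨∅, .empty, semivar_empty m, fun ω _ => hP ω⟩

lemma MAE.mono {m : VectorMeasure Ω X} {P Q : Ω → Prop} (hP : MAE m P)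
    (hPQ : ∀ ω, P ω → Q ω) : MAE m Q :=
  let ⟨N, hNm, hN, hPN⟩ := hP
  ⟨N, hNm, hN, fun ω hω => hPQ ω (hPN ω hω)⟩

lemma MAE.all {ι : Type*} [Countable ι] {m : VectorMeasure Ω X} {P : ι → Ω → Prop}
    (hP : ∀ i, MAE m (P i)) : MAE m fun ω => ∀ i, P i ω := by
  choose N hNm hN hPN using hP
  exact ⟨⋃ i, N i, .iUnion hNm, semivar_iUnion_null hN,
    fun ω hω i => hPN i ω fun hωi => hω (Set.mem_iUnion_of_mem i hωi)⟩

lemma MAE.all_ne {ι : Type*} [Countable ι] {m : VectorMeasure Ω X}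
    {P : ι → ι → Ω → Prop} (hP : ∀ i j, i ≠ j → MAE m (P i j)) :
    MAE m fun ω => ∀ i j, i ≠ j → P i j ω := by
  refine MAE.all fun i => MAE.all fun j => ?_
  by_cases hij : i = j
  · exact MAE.of_forall fun _ hne => absurd hij hne
  · exact (hP i j hij).mono fun _ hω _ => hω

lemma MAE.ae {m : VectorMeasure Ω X} {P : Ω → Prop} (hP : MAE m P) (x : X →L[ℝ] ℝ) :
    ∀ᵐ ω ∂(dualApply m x).totalVariation, P ω :=
  let ⟨_, _, hN, hPN⟩ := hP
  measure_mono_null (fun ω hω => by_contra fun hωN => hω (hPN ω hωN))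
    (totalVariation_dualApply_eq_zero hN x)

section Sign

variable {Ω : Type*}

open Classical in
def signOn (E : Set Ω) (ω : Ω) : ℝ := if ω ∈ E then -1 else 1

lemma signOn_mul_eq (E : Set Ω) (f : Ω → ℝ) :
    signOn E * f = Eᶜ.indicator f - E.indicator f := by
  ext ω
  by_cases hω : ω ∈ E <;> simp [signOn, hω]

lemma abs_signOn_mul (E : Set Ω) (f : Ω → ℝ) (ω : Ω) : |(signOn E * f) ω| = |f ω| := by
  by_cases hω : ω ∈ E <;> simp [signOn, hω]

lemma abs_eq_signOn_mul_of_pairwise {ι : Type*} (h : ι → Ω → ℝ) {ω : Ω}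
    (hdisj : ∀ i j, i ≠ j → h i ω * h j ω = 0) (n : ι) :
    |h n ω| = signOn (⋃ k, {ω | h k ω < 0}) ω * h n ω := by
  rcases lt_or_ge (h n ω) 0 with hneg | hnonneg
  · have hω : ω ∈ ⋃ k, {ω | h k ω < 0} := Set.mem_iUnion.2 ⟨n, hneg⟩
    simp [signOn, hω, abs_of_neg hneg]
  by_cases hω : ω ∈ ⋃ k, {ω | h k ω < 0}
  · obtain ⟨k, hk⟩ := Set.mem_iUnion.1 hω
    have hkn : k ≠ n := by
      rintro rfl
      exact not_lt.2 hnonneg hk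
    have hn : h n ω = 0 := (mul_eq_zero.1 (hdisj k n hkn)).resolve_left (ne_of_lt hk)
    simp [hn]
  · simp [signOn, hω, abs_of_nonneg hnonneg]

end Sign

lemma posPart_le_totalVariation (s : SignedMeasure Ω) :
    s.toJordanDecomposition.posPart ≤ s.totalVariation :=
  Measure.le_add_right le_rfl

lemma negPart_le_totalVariation (s : SignedMeasure Ω) :
    s.toJordanDecomposition.negPart ≤ s.totalVariation :=
  Measure.le_add_left le_rfl

lemma sIntegral_sub {s : SignedMeasure Ω} {f g : Ω → ℝ} (hf : Integrable f s.totalVariation)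
    (hg : Integrable g s.totalVariation) (A : Set Ω) :
    sIntegral s (f - g) A = sIntegral s f A - sIntegral s g A := by
  have hpos := posPart_le_totalVariation s
  have hneg := negPart_le_totalVariation s
  simp only [sIntegral, Pi.sub_apply]
  rw [integral_sub (hf.mono_measure hpos).restrict (hg.mono_measure hpos).restrict,
    integral_sub (hf.mono_measure hneg).restrict (hg.mono_measure hneg).restrict]
  ring

lemma sIntegral_indicator (s : SignedMeasure Ω) {E : Set Ω} (hE : MeasurableSet E)
    (f : Ω → ℝ) (A : Set Ω) : sIntegral s (E.indicator f) A = sIntegral s f (A ∩ E) := by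
  simp only [sIntegral, setIntegral_indicator hE]

lemma sIntegral_congr_mae {m : VectorMeasure Ω X} {f g : Ω → ℝ}
    (hfg : MAE m fun ω => f ω = g ω) (x : X →L[ℝ] ℝ) (A : Set Ω) :
    sIntegral (dualApply m x) f A = sIntegral (dualApply m x) g A := by
  have hae := hfg.ae x
  simp only [sIntegral]
  rw [integral_congr_ae (ae_restrict_of_ae (ae_mono (posPart_le_totalVariation _) hae)),
    integral_congr_ae (ae_restrict_of_ae (ae_mono (negPart_le_totalVariation _) hae))]

lemma MIntegrable.sub {m : VectorMeasure Ω X} {f g : Ω → ℝ} (hf : MIntegrable m f)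
    (hg : MIntegrable m g) : MIntegrable m (f - g) := by
  refine ⟨hf.1.sub hg.1, fun x => (hf.2.1 x).sub (hg.2.1 x), fun A hA => ?_⟩
  obtain ⟨v, hv⟩ := hf.2.2 A hA
  obtain ⟨w, hw⟩ := hg.2.2 A hA
  exact ⟨v - w, fun x => by rw [map_sub, hv, hw, sIntegral_sub (hf.2.1 x) (hg.2.1 x)]⟩

lemma MIntegrable.indicator {m : VectorMeasure Ω X} {f : Ω → ℝ} (hf : MIntegrable m f)
    {E : Set Ω} (hE : MeasurableSet E) : MIntegrable m (E.indicator f) := by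
  refine ⟨hf.1.indicator hE, fun x => (hf.2.1 x).indicator hE, fun A hA => ?_⟩
  obtain ⟨v, hv⟩ := hf.2.2 (A ∩ E) (hA.inter hE)
  exact ⟨v, fun x => by rw [hv, sIntegral_indicator _ hE]⟩

lemma MIntegrable.congr_mae {m : VectorMeasure Ω X} {f g : Ω → ℝ} (hf : MIntegrable m f)
    (hg : Measurable g) (hfg : MAE m fun ω => f ω = g ω) : MIntegrable m g := by
  refine ⟨hg, fun x => (hf.2.1 x).congr ?_, fun A hA => ?_⟩
  · exact hfg.ae x
  · obtain ⟨v, hv⟩ := hf.2.2 A hA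
    exact ⟨v, fun x => by rw [hv, sIntegral_congr_mae hfg]⟩

lemma mNorm_congr_abs (m : VectorMeasure Ω X) {f g : Ω → ℝ}
    (hfg : ∀ ω, |f ω| = |g ω|) : mNorm m f = mNorm m g := by
  simp only [mNorm, hfg]

lemma mNorm_eq_zero_of_mae {m : VectorMeasure Ω X} {f : Ω → ℝ}
    (hf : MAE m fun ω => f ω = 0) : mNorm m f = 0 := by
  have hzero : ∀ x : {x : X →L[ℝ] ℝ // ‖x‖ ≤ 1},
      ∫ ω, |f ω| ∂(dualApply m x.1).totalVariation = 0 := fun x =>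
    integral_eq_zero_of_ae ((hf.ae x.1).mono fun ω hω => by simp [hω])
  have : Nonempty {x : X →L[ℝ] ℝ // ‖x‖ ≤ 1} := ⟨⟨0, by simp⟩⟩
  simp only [mNorm, hzero, ciSup_const]

lemma MIntegrable.signOn_mul {m : VectorMeasure Ω X} {f : Ω → ℝ} (hf : MIntegrable m f)
    {E : Set Ω} (hE : MeasurableSet E) : MIntegrable m (signOn E * f) := by
  rw [signOn_mul_eq]
  exact (hf.indicator hE.compl).sub (hf.indicator hE)

lemma mNorm_signOn_mul (m : VectorMeasure Ω X) (E : Set Ω) (f : Ω → ℝ) :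
    mNorm m (signOn E * f) = mNorm m f :=
  mNorm_congr_abs m (abs_signOn_mul E f)

lemma IsBddLinFunctional.comp_mul {α : Type*} {mem : (α → ℝ) → Prop} {nrm : (α → ℝ) → ℝ}
    {T : (α → ℝ) → ℝ} (hT : IsBddLinFunctional mem nrm T) (u : α → ℝ)
    (hmem : ∀ f, mem f → mem (u * f)) (hnrm : ∀ f, mem f → nrm (u * f) = nrm f) :
    IsBddLinFunctional mem nrm fun f => T (u * f) := by
  obtain ⟨hadd, hsmul, C, hC⟩ := hT
  refine ⟨fun f g hf hg => ?_, fun c f hf => ?_, C, fun f hf => ?_⟩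
  · dsimp only
    rw [mul_add]
    exact hadd _ _ (hmem f hf) (hmem g hg)
  · dsimp only
    rw [mul_smul_comm]
    exact hsmul _ _ (hmem f hf)
  · rw [← hnrm f hf]
    exact hC _ (hmem f hf)

lemma IsBddLinFunctional.apply_congr_mae {m : VectorMeasure Ω X} {T : (Ω → ℝ) → ℝ} (hT : IsBddLinFunctional (MIntegrable m) (mNorm m) T)
    {f g : Ω → ℝ} (hf : MIntegrable m f) (hg : MIntegrable m g)
    (hfg : MAE m fun ω => f ω = g ω) : T f = T g := by
  obtain ⟨hadd, -, C, hC⟩ := hT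
  have hnull : T (f - g) = 0 := by
    have := hC _ (hf.sub hg)
    rwa [mNorm_eq_zero_of_mae (f := f - g) (hfg.mono fun _ => sub_eq_zero.2), mul_zero,
      abs_nonpos_iff] at this
  calc T f = T (g + (f - g)) := by rw [add_sub_cancel]
    _ = T g := by rw [hadd _ _ hg (hf.sub hg), hnull, add_zero]

theorem statement9_general
    {Ω : Type*} [MeasurableSpace Ω]
    {X : Type*} [NormedAddCommGroup X] [NormedSpace ℝ X]
    (m : VectorMeasure Ω X)
    (h : ℕ → Ω → ℝ) (hh : ∀ n, MIntegrable m (h n))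
    (hwn : WeaklyNullSeq (MIntegrable m) (mNorm m) h)
    (hdisj : ∀ i j, i ≠ j → MAE m (fun ω => h i ω * h j ω = 0)) :
    WeaklyNullSeq (MIntegrable m) (mNorm m) (fun n ω => |h n ω|) := by
  intro T hT
  set E := ⋃ k, {ω | h k ω < 0}
  have hE : MeasurableSet E := .iUnion fun k => measurableSet_lt (hh k).1 measurable_const
  have hsign : ∀ n, MAE m fun ω => (signOn E * h n) ω = |h n ω| := fun n =>
    (MAE.all_ne hdisj).mono fun _ hω => (abs_eq_signOn_mul_of_pairwise h hω n).symm
  have hTsign := hT.comp_mul (signOn E) (fun _ hf => hf.signOn_mul hE)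
    (fun f _ => mNorm_signOn_mul m E f)
  refine (hwn _ hTsign).congr fun n => hT.apply_congr_mae ((hh n).signOn_mul hE) ?_ (hsign n)
  exact ((hh n).signOn_mul hE).congr_mae (hh n).1.abs (hsign n)

/-- if `{hₙ} ⊆ L¹(m)` is weakly null with pairwise disjoint supports, then
`{|hₙ|}` is weakly null in `L¹(m)`. -/
theorem statement9
    {Ω : Type*} [MeasurableSpace Ω]
    {X : Type*} [NormedAddCommGroup X] [NormedSpace ℝ X] [CompleteSpace X]
    (m : VectorMeasure Ω X)
    (h : ℕ → Ω → ℝ) (hh : ∀ n, MIntegrable m (h n))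
    (hwn : WeaklyNullSeq (MIntegrable m) (mNorm m) h)
    (hdisj : ∀ i j, i ≠ j → MAE m (fun ω => h i ω * h j ω = 0)) :
    WeaklyNullSeq (MIntegrable m) (mNorm m) (fun n ω => |h n ω|) :=
  statement9_general m h hh hwn hdisj

end Paper
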